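/- arXiv:1212.6780 — 7 statements merged into one kernel-verified Lean document; each statement's English description precedes it below -/
import Mathlib

section
/- For any matrix a ∈ M_n(F) over a field F, there exists an invertible matrix ã ∈ GL_n(F) such that rk(a - ã) = n - rk(a). -/
theorem exists_invertible_rank_sub {F : Type*} [Field F] {n : ℕ}
    (a : Matrix (Fin n) (Fin n) F) :
    ∃ b : Matrix (Fin n) (Fin n) F, IsUnit b ∧ (a - b).rank = n - a.rank := by
  classical
  obtain ⟨L, L', D, hD⟩ :=
    Matrix.Pivot.exists_list_transvec_mul_mul_list_transvec_eq_diagonal a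
  set P := (L.map Matrix.TransvectionStruct.toMatrix).prod with hP
  set Q := (L'.map Matrix.TransvectionStruct.toMatrix).prod with hQ
  have hPdet : IsUnit P.det := by simp [hP]
  have hQdet : IsUnit Q.det := by simp [hQ]
  have ha : a = P⁻¹ * Matrix.diagonal D * Q⁻¹ := by
    rw [← hD]
    calc a = (P⁻¹ * P) * a * (Q * Q⁻¹) := by
            rw [Matrix.nonsing_inv_mul P hPdet, Matrix.mul_nonsing_inv Q hQdet,
              Matrix.one_mul, Matrix.mul_one]
      _ = P⁻¹ * (P * a * Q) * Q⁻¹ := by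
            simp only [Matrix.mul_assoc]
  set D' : Fin n → F := fun i => if D i = 0 then 1 else D i with hD'
  refine ⟨P⁻¹ * Matrix.diagonal D' * Q⁻¹, ?_, ?_⟩
  · apply ((Matrix.isUnit_nonsing_inv_iff.mpr (Matrix.isUnit_iff_isUnit_det P |>.mpr
      hPdet)).mul ?_).mul (Matrix.isUnit_nonsing_inv_iff.mpr
      (Matrix.isUnit_iff_isUnit_det Q |>.mpr hQdet))
    rw [Matrix.isUnit_iff_isUnit_det, Matrix.det_diagonal, isUnit_iff_ne_zero]
    apply Finset.prod_ne_zero_iff.mpr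
    intro i _
    simp only [hD']
    split <;> simp_all
  · have hsub : a - P⁻¹ * Matrix.diagonal D' * Q⁻¹
        = P⁻¹ * Matrix.diagonal (fun i => D i - D' i) * Q⁻¹ := by
      have : Matrix.diagonal (fun i => D i - D' i)
          = Matrix.diagonal D - Matrix.diagonal D' := by
        rw [Matrix.diagonal_sub]
      rw [ha, this, Matrix.mul_sub, Matrix.sub_mul]
    have hrank : ∀ w : Fin n → F,
        (P⁻¹ * Matrix.diagonal w * Q⁻¹).rank = (Matrix.diagonal w).rank := by
      intro w
      rw [Matrix.rank_mul_eq_left_of_isUnit_det Q⁻¹ _ (by simpa using hQdet),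
        Matrix.rank_mul_eq_right_of_isUnit_det P⁻¹ _ (by simpa using hPdet)]
    rw [hsub, hrank, ha, hrank, Matrix.rank_diagonal, Matrix.rank_diagonal]
    have : ∀ i, (D i - D' i ≠ 0) ↔ ¬ (D i ≠ 0) := by
      intro i
      simp only [hD']
      split <;> simp_all
    rw [Fintype.card_congr (Equiv.subtypeEquivRight this),
      Fintype.card_subtype_compl, Fintype.card_fin]
end

section
/- For a permutation p ∈ S_n with permutation matrix A_p over a field, the normalized Hamming distance from p to the identity satisfies ρ(Id - A_p) ≤ d_Hamm(Id, p) ≤ 2·ρ(Id - A_p), where ρ(x) = rk(x)/n and d_Hamm(Id, p) = |{i : p(i) ≠ i}|/n. -/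
section AuxRankHamming

variable {n : ℕ} (p : Equiv.Perm (Fin n))

noncomputable instance auxFintypeSameCycleQuot :
    Fintype (Quotient (Equiv.Perm.SameCycle.setoid p)) := by
  classical exact Quotient.fintype _

lemma aux_ker_permMatrix {F : Type*} [Field F] :
    LinearMap.ker ((1 - p.permMatrix F).mulVecLin) =
    LinearMap.range (LinearMap.funLeft F F (Quotient.mk (Equiv.Perm.SameCycle.setoid p))) := by
  classical
  ext x
  have hmv : ∀ x : Fin n → F, ∀ i, ((1 - p.permMatrix F).mulVec x) i = x i - x (p i) := by
    intro x i
    rw [Matrix.sub_mulVec]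
    simp [Matrix.mulVec, dotProduct, Equiv.Perm.permMatrix, PEquiv.toMatrix_apply,
      Equiv.toPEquiv, Option.mem_def, eq_comm, Matrix.one_apply]
  constructor
  · intro hx
    simp only [LinearMap.mem_ker, Matrix.mulVecLin_apply] at hx
    have hfix : ∀ i, x (p i) = x i := by
      intro i
      have h2 := congrFun hx i
      rw [hmv x i] at h2
      have h3 : x i - x (p i) = 0 := h2
      exact (sub_eq_zero.mp h3).symm
    have hpow : ∀ (k : ℕ) (i : Fin n), x ((p ^ k) i) = x i := by
      intro k
      induction k with
      | zero => simp
      | succ k ih => intro i; rw [pow_succ, Equiv.Perm.mul_apply, ih, hfix]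
    refine ⟨Quotient.lift x ?_, ?_⟩
    · intro a b hab
      obtain ⟨k, -, hk⟩ := (hab : p.SameCycle a b).exists_pow_eq'
      rw [← hk, hpow]
    · ext i; simp [LinearMap.funLeft]
  · rintro ⟨v, rfl⟩
    simp only [LinearMap.mem_ker, Matrix.mulVecLin_apply]
    ext i
    rw [hmv _ i]
    have : (Quotient.mk (Equiv.Perm.SameCycle.setoid p) (p i)) =
        (Quotient.mk (Equiv.Perm.SameCycle.setoid p) i) := by
      apply Quotient.sound
      exact ⟨-1, by simp⟩
    simp [LinearMap.funLeft, this]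

lemma aux_rank_permMatrix {F : Type*} [Field F] :
    (1 - p.permMatrix F).rank +
      Fintype.card (Quotient (Equiv.Perm.SameCycle.setoid p)) = n := by
  classical
  have h := LinearMap.finrank_range_add_finrank_ker ((1 - p.permMatrix F).mulVecLin)
  rw [aux_ker_permMatrix p] at h
  have hinj : Function.Injective (LinearMap.funLeft F F
      (Quotient.mk (Equiv.Perm.SameCycle.setoid p))) :=
    LinearMap.funLeft_injective_of_surjective F F _ (Quotient.mk_surjective)
  rw [LinearMap.finrank_range_of_inj hinj] at h
  simpa [Matrix.rank, Module.finrank_pi] using h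

lemma aux_fix_le_card :
    (Finset.univ.filter fun i => p i = i).card ≤
      Fintype.card (Quotient (Equiv.Perm.SameCycle.setoid p)) := by
  classical
  rw [← Finset.card_univ]
  apply Finset.card_le_card_of_injOn
    (fun i => Quotient.mk (Equiv.Perm.SameCycle.setoid p) i)
    (fun _ _ => Finset.mem_univ _)
  intro a ha b hb hab
  simp only [Finset.mem_coe, Finset.mem_filter] at ha hb
  obtain ⟨k, hk⟩ := Quotient.exact hab
  rw [Equiv.Perm.zpow_apply_eq_self_of_apply_eq_self ha.2] at hk
  exact hk

lemma aux_two_card :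
    2 * Fintype.card (Quotient (Equiv.Perm.SameCycle.setoid p)) ≤
      n + (Finset.univ.filter fun i => p i = i).card := by
  classical
  have hn : ∑ c : Quotient (Equiv.Perm.SameCycle.setoid p),
      (Finset.univ.filter fun i =>
        Quotient.mk (Equiv.Perm.SameCycle.setoid p) i = c).card = n := by
    rw [← Finset.card_eq_sum_card_fiberwise
      (fun i _ => Finset.mem_univ (Quotient.mk (Equiv.Perm.SameCycle.setoid p) i))]
    simp
  have hf : ∑ c : Quotient (Equiv.Perm.SameCycle.setoid p),
      ((Finset.univ.filter fun i => p i = i).filter fun i =>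
        Quotient.mk (Equiv.Perm.SameCycle.setoid p) i = c).card =
      (Finset.univ.filter fun i => p i = i).card :=
    (Finset.card_eq_sum_card_fiberwise (fun i _ => Finset.mem_univ _)).symm
  have key : ∀ c : Quotient (Equiv.Perm.SameCycle.setoid p),
      2 ≤ (Finset.univ.filter fun i =>
          Quotient.mk (Equiv.Perm.SameCycle.setoid p) i = c).card +
        ((Finset.univ.filter fun i => p i = i).filter fun i =>
          Quotient.mk (Equiv.Perm.SameCycle.setoid p) i = c).card := by
    intro c
    obtain ⟨i, rfl⟩ := Quotient.exists_rep c
    by_cases hi : p i = i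
    · have h1 : 0 < (Finset.univ.filter fun j =>
          Quotient.mk (Equiv.Perm.SameCycle.setoid p) j =
            Quotient.mk (Equiv.Perm.SameCycle.setoid p) i).card :=
        Finset.card_pos.mpr ⟨i, Finset.mem_filter.mpr ⟨Finset.mem_univ i, rfl⟩⟩
      have h2 : 0 < ((Finset.univ.filter fun j => p j = j).filter fun j =>
          Quotient.mk (Equiv.Perm.SameCycle.setoid p) j =
            Quotient.mk (Equiv.Perm.SameCycle.setoid p) i).card :=
        Finset.card_pos.mpr ⟨i, Finset.mem_filter.mpr
          ⟨Finset.mem_filter.mpr ⟨Finset.mem_univ i, hi⟩, rfl⟩⟩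
      omega
    · have hmem : Quotient.mk (Equiv.Perm.SameCycle.setoid p) (p i) =
          Quotient.mk (Equiv.Perm.SameCycle.setoid p) i := Quotient.sound ⟨-1, by simp⟩
      have h1 : 1 < (Finset.univ.filter fun j =>
          Quotient.mk (Equiv.Perm.SameCycle.setoid p) j =
            Quotient.mk (Equiv.Perm.SameCycle.setoid p) i).card :=
        Finset.one_lt_card.mpr ⟨i, Finset.mem_filter.mpr ⟨Finset.mem_univ i, rfl⟩,
          p i, Finset.mem_filter.mpr ⟨Finset.mem_univ _, hmem⟩, fun h => hi h.symm⟩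
      omega
  calc 2 * Fintype.card (Quotient (Equiv.Perm.SameCycle.setoid p))
      = ∑ _c : Quotient (Equiv.Perm.SameCycle.setoid p), 2 := by
        rw [Finset.sum_const, Finset.card_univ, smul_eq_mul, mul_comm]
    _ ≤ _ := Finset.sum_le_sum (fun c _ => key c)
    _ = n + (Finset.univ.filter fun i => p i = i).card := by
        rw [Finset.sum_add_distrib, hn, hf]

end AuxRankHamming

theorem rank_le_hamming_le_two_rank {F : Type*} [Field F] {n : ℕ}
    (p : Equiv.Perm (Fin n)) :
    ((1 - p.permMatrix F).rank : ℝ) / n ≤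
        ((Finset.univ.filter fun i => p i ≠ i).card : ℝ) / n ∧
      ((Finset.univ.filter fun i => p i ≠ i).card : ℝ) / n ≤
        2 * (((1 - p.permMatrix F).rank : ℝ) / n) := by
  classical
  have hrank := aux_rank_permMatrix p (F := F)
  have hfix := aux_fix_le_card p
  have htwo := aux_two_card p
  have hmf : (Finset.univ.filter fun i => p i ≠ i).card +
      (Finset.univ.filter fun i => p i = i).card = n := by
    have h := Finset.card_filter_add_card_filter_not
      (s := (Finset.univ : Finset (Fin n))) (p := fun i => p i = i)
    simpa [add_comm] using h
  have h1 : (1 - p.permMatrix F).rank ≤ (Finset.univ.filter fun i => p i ≠ i).card := by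
    omega
  have h2 : (Finset.univ.filter fun i => p i ≠ i).card ≤
      2 * (1 - p.permMatrix F).rank := by omega
  rcases Nat.eq_zero_or_pos n with hn | hn
  · subst hn
    simp
  · have hn' : (0 : ℝ) < n := by exact_mod_cast hn
    constructor
    · apply div_le_div_of_nonneg_right ?_ hn'.le
      exact_mod_cast h1
    · rw [← mul_div_assoc]
      apply div_le_div_of_nonneg_right ?_ hn'.le
      exact_mod_cast h2
end

section
/- For A ∈ GL_n(ℂ), let M_1(A) denote the algebraic multiplicity of the eigenvalue 1 divided by n. Then M_1(A ⊗ A) ≤ M_1(A)² + (1 - M_1(A))². -/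
open Matrix Kronecker

/-- `M₁ A` : the algebraic multiplicity of the eigenvalue `1` of `A`, divided by the size. -/
noncomputable def M1 {m : Type*} [Fintype m] [DecidableEq m] (A : Matrix m m ℂ) : ℝ :=
  (A.charpoly.roots.count 1 : ℝ) / Fintype.card m

/-!
Triangularize `A`. If `T` is triangular with diagonal `λ₁, …, λₙ`, then `T ⊗ T` is triangular for
the lexicographic order with diagonal `λᵢ λⱼ`, so the eigenvalues of `A ⊗ A` are the products
`λᵢ λⱼ`, counted with multiplicity. A product `λᵢ λⱼ` equals `1` only if `λᵢ` and `λⱼ` are both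
equal to `1` or both different from `1`; with `k` of the `λᵢ` equal to `1`, at most
`k² + (n - k)²` of the `n²` pairs qualify.
-/

open Polynomial

namespace Multiset

theorem map_prodMap_product {α β γ δ : Type*} (s : Multiset α) (t : Multiset β) (f : α → γ)
    (g : β → δ) : (s ×ˢ t).map (Prod.map f g) = s.map f ×ˢ t.map g := by
  simp [SProd.sprod, Multiset.product, bind_map, map_bind, map_map]

theorem count_one_map_mul_product_le {M : Type*} [MulOneClass M] [DecidableEq M]
    (s : Multiset M) :
    ((s ×ˢ s).map fun x => x.1 * x.2).count 1 ≤ s.count 1 ^ 2 + (card s - s.count 1) ^ 2 := by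
  set s₁ := s.filter (· = 1)
  set s₂ := s.filter (· ≠ 1)
  have hs : s = s₁ + s₂ := (filter_add_not _ s).symm
  have hcard₁ : card s₁ = s.count 1 := by
    rw [count_eq_card_filter_eq]; simp only [s₁, eq_comm]
  have hcard₂ : card s₂ = card s - s.count 1 := by
    rw [← hcard₁, hs, card_add, Nat.add_sub_cancel_left]
  have hmixed : ∀ {t u : Multiset M}, (∀ x ∈ t, ∀ y ∈ u, x * y ≠ 1) →
      ((t ×ˢ u).map fun x => x.1 * x.2).count 1 = 0 := by
    intro t u h
    simp only [count_eq_zero, mem_map, mem_product, Prod.exists, not_exists, not_and]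
    exact fun x y hxy => h x hxy.1 y hxy.2
  have h₁₂ : ((s₁ ×ˢ s₂).map fun x => x.1 * x.2).count 1 = 0 := hmixed fun x hx y hy => by
    rw [(mem_filter.1 hx).2, one_mul]; exact (mem_filter.1 hy).2
  have h₂₁ : ((s₂ ×ˢ s₁).map fun x => x.1 * x.2).count 1 = 0 := hmixed fun x hx y hy => by
    rw [(mem_filter.1 hy).2, mul_one]; exact (mem_filter.1 hx).2
  have hdiag : ∀ t : Multiset M, ((t ×ˢ t).map fun x => x.1 * x.2).count 1 ≤ card t ^ 2 :=
    fun t => (count_le_card _ _).trans (by rw [card_map, card_product, sq])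
  calc ((s ×ˢ s).map fun x => x.1 * x.2).count 1
      = ((s₁ ×ˢ s₁).map fun x => x.1 * x.2).count 1 +
          ((s₂ ×ˢ s₂).map fun x => x.1 * x.2).count 1 := by
        rw [hs, add_product, product_add, product_add]
        simp only [map_add, count_add, h₁₂, h₂₁]
        ring
    _ ≤ card s₁ ^ 2 + card s₂ ^ 2 := add_le_add (hdiag s₁) (hdiag s₂)
    _ = s.count 1 ^ 2 + (card s - s.count 1) ^ 2 := by rw [hcard₁, hcard₂]

end Multiset

theorem Polynomial.roots_prod_univ_X_sub_C {ι R : Type*} [Fintype ι] [CommRing R] [IsDomain R]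
    (d : ι → R) : (∏ i, (X - C (d i))).roots = Finset.univ.val.map d := by
  rw [roots_prod _ _ (Finset.prod_ne_zero_iff.2 fun i _ => X_sub_C_ne_zero _)]
  simp [Multiset.bind_singleton]

namespace Matrix

section BlockTriangular

variable {R m p α β : Type*}

theorem BlockTriangular.kronecker [MulZeroClass R] [LinearOrder α] [LinearOrder β]
    {A : Matrix m m R} {B : Matrix p p R} {a : m → α} {b : p → β}
    (hA : A.BlockTriangular a) (hB : B.BlockTriangular b) :
    (A ⊗ₖ B).BlockTriangular fun x => toLex (a x.1, b x.2) := by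
  rintro ⟨i, k⟩ ⟨j, l⟩ hlt
  rcases Prod.Lex.lt_iff.1 hlt with h | ⟨-, h⟩
  · simp [hA h]
  · simp [hB h]

theorem BlockTriangular.charpoly_eq_prod [CommRing R] [Fintype m] [DecidableEq m]
    [LinearOrder α] {M : Matrix m m R} {b : m → α} (hM : M.BlockTriangular b)
    (hb : b.Injective) : M.charpoly = ∏ i, (X - C (M i i)) := by
  rw [Matrix.charpoly, BlockTriangular.det hM.charmatrix, Finset.prod_image fun i _ j _ h => hb h]
  refine Finset.prod_congr rfl fun i _ => ?_
  let : Unique { j // b j = b i } := ⟨⟨⟨i, rfl⟩⟩, fun j => Subtype.ext (hb j.2)⟩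
  rw [det_unique]
  simp [toSquareBlock_def, charmatrix_apply_eq]
  rfl

theorem isLowerTriangular_reindex_fromBlocks [Zero R] {n : ℕ} {C : Matrix (Fin n) (Fin n) R}
    (hC : C.IsLowerTriangular) (r : Matrix (Fin 1) (Fin n) R) (d : Matrix (Fin 1) (Fin 1) R) :
    (reindex finSumFinEquiv finSumFinEquiv (fromBlocks C 0 r d)).IsLowerTriangular := by
  rw [IsLowerTriangular, blockTriangular_reindex_iff]
  rintro (i | i) (j | j) h
  · exact hC h
  · rfl
  · simp [Fin.lt_def] at h
    omega
  · simp [Subsingleton.elim i j] at h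

end BlockTriangular

section Triangularization

variable {K : Type*} [Field K]

theorem exists_mulVec_eq_smul [IsAlgClosed K] {m : Type*} [Fintype m] [DecidableEq m]
    [Nonempty m] (A : Matrix m m K) : ∃ μ : K, ∃ v ≠ 0, A *ᵥ v = μ • v := by
  obtain ⟨μ, hμ⟩ := Module.End.exists_eigenvalue (toLin' A)
  obtain ⟨v, hv⟩ := hμ.exists_hasEigenvector
  exact ⟨μ, v, hv.2, by simpa using hv.apply_eq_smul⟩

theorem exists_mulVec_single_eq {m : Type*} [Fintype m] [DecidableEq m] {v : m → K}
    (hv : v ≠ 0) (j : m) : ∃ P : GL m K, P.val *ᵥ Pi.single j 1 = v := by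
  obtain ⟨i, hi⟩ : ∃ i, v i ≠ 0 := Function.ne_iff.1 hv
  let P : Matrix m m K := ((1 : Matrix m m K).updateCol i v).submatrix id (Equiv.swap i j)
  have h₀ : ((1 : Matrix m m K).updateCol i v).det = v i := by
    rw [← cramer_apply, cramer_one]; rfl
  have hP : P.det ≠ 0 := by
    rw [det_permute', h₀]
    exact mul_ne_zero ((Units.isUnit _).map (Int.castRingHom K)).ne_zero hi
  refine ⟨.mkOfDetNeZero P hP, ?_⟩
  ext k
  simp [P, mulVec_single]

theorem exists_isLowerTriangular_conj [IsAlgClosed K] :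
    ∀ {n : ℕ} (A : Matrix (Fin n) (Fin n) K), ∃ U : GL (Fin n) K,
      (U.val⁻¹ * A * U.val).IsLowerTriangular
  | 0, _ => ⟨1, fun i => i.elim0⟩
  | n + 1, A => by
    -- Move an eigenvector to the last basis vector: above the diagonal, the last column of
    -- `P⁻¹ A P` vanishes, and its leading `n × n` block is triangularized by induction.
    obtain ⟨μ, v, hv, hAv⟩ := exists_mulVec_eq_smul A
    obtain ⟨P, hPv⟩ := exists_mulVec_single_eq hv (Fin.last n)
    set e : Fin n ⊕ Fin 1 ≃ Fin (n + 1) := finSumFinEquiv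
    set B := P.val⁻¹ * A * P.val
    have hB : B *ᵥ Pi.single (Fin.last n) 1 = μ • Pi.single (Fin.last n) 1 := by
      rw [← mulVec_mulVec, hPv, ← mulVec_mulVec, hAv, mulVec_smul, ← hPv, mulVec_mulVec,
        ← coe_units_inv, Units.inv_mul, one_mulVec]
    set φ := reindexAlgEquiv K K e
    set N := φ.symm B
    have hN : N.toBlocks₁₂ = 0 := by
      ext i j
      have hj : e (.inr j) = Fin.last n := by ext; simp [e, Subsingleton.elim j 0]
      have hi : e (.inl i) ≠ Fin.last n := (Fin.castSucc_lt_last i).ne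
      simpa [N, φ, toBlocks₁₂, hj, mulVec_single, hi] using congrFun hB (e (.inl i))
    obtain ⟨W, hW⟩ := exists_isLowerTriangular_conj N.toBlocks₁₁
    let Q : GL (Fin n ⊕ Fin 1) K :=
      ⟨fromBlocks W.val 0 0 1, fromBlocks W.val⁻¹ 0 0 1, by simp [fromBlocks_multiply],
        by simp [fromBlocks_multiply]⟩
    refine ⟨P * Units.map φ.toMonoidHom Q, ?_⟩
    have hconj : (P * Units.map φ.toMonoidHom Q).val⁻¹ * A * (P * Units.map φ.toMonoidHom Q).val =
        φ ((Q⁻¹).val * N * Q.val) := by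
      rw [map_mul, map_mul, AlgEquiv.apply_symm_apply, ← coe_units_inv]
      simp [B, mul_assoc]
    rw [hconj, ← fromBlocks_toBlocks N, hN]
    simp [Q, fromBlocks_multiply]
    exact isLowerTriangular_reindex_fromBlocks hW _ _

end Triangularization

variable {K : Type*} [Field K] [IsAlgClosed K]

theorem roots_charpoly_kronecker_fin {m p : ℕ} (A : Matrix (Fin m) (Fin m) K)
    (B : Matrix (Fin p) (Fin p) K) :
    (A ⊗ₖ B).charpoly.roots = (A.charpoly.roots ×ˢ B.charpoly.roots).map fun x => x.1 * x.2 := by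
  obtain ⟨U, hT⟩ := exists_isLowerTriangular_conj A
  obtain ⟨V, hS⟩ := exists_isLowerTriangular_conj B
  set T := U.val⁻¹ * A * U.val
  set S := V.val⁻¹ * B * V.val
  have hTS : (T ⊗ₖ S).charpoly = (A ⊗ₖ B).charpoly := by
    rw [mul_kronecker_mul, mul_kronecker_mul, mul_assoc, charpoly_mul_comm, mul_assoc,
      ← mul_kronecker_mul, ← mul_kronecker_mul, ← coe_units_inv, ← coe_units_inv, Units.mul_inv,
      Units.mul_inv, mul_one, mul_one]
  rw [← charpoly_units_conj' U A, ← charpoly_units_conj' V B, ← hTS,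
    hT.charpoly_eq_prod OrderDual.toDual.injective, hS.charpoly_eq_prod OrderDual.toDual.injective,
    (hT.kronecker hS).charpoly_eq_prod (fun x y h => by simpa [Prod.ext_iff] using h)]
  simp only [roots_prod_univ_X_sub_C, ← Multiset.map_prodMap_product, Multiset.map_map]
  rw [← Finset.univ_product_univ, Finset.product_val]
  rfl

theorem roots_charpoly_kronecker {m p : Type*} [Fintype m] [DecidableEq m] [Fintype p]
    [DecidableEq p] (A : Matrix m m K) (B : Matrix p p K) :
    (A ⊗ₖ B).charpoly.roots = (A.charpoly.roots ×ˢ B.charpoly.roots).map fun x => x.1 * x.2 := by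
  let e := Fintype.equivFin m
  let f := Fintype.equivFin p
  rw [← charpoly_reindex e A, ← charpoly_reindex f B, ← charpoly_reindex (e.prodCongr f),
    ← kroneckerMap_reindex]
  exact roots_charpoly_kronecker_fin _ _

end Matrix

theorem M1_kronecker_le_general {n : ℕ} (A : Matrix (Fin n) (Fin n) ℂ) :
    M1 (A ⊗ₖ A) ≤ M1 A ^ 2 + (1 - M1 A) ^ 2 := by
  have hcard : Multiset.card A.charpoly.roots = n := by
    rw [IsAlgClosed.card_roots_eq_natDegree, charpoly_natDegree_eq_dim, Fintype.card_fin]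
  have hk : A.charpoly.roots.count 1 ≤ n := (Multiset.count_le_card _ _).trans hcard.le
  have hcount := Multiset.count_one_map_mul_product_le A.charpoly.roots
  rw [← roots_charpoly_kronecker, hcard] at hcount
  simp only [M1, Fintype.card_prod, Fintype.card_fin, Nat.cast_mul]
  generalize A.charpoly.roots.count 1 = k at hk hcount ⊢
  generalize (A ⊗ₖ A).charpoly.roots.count 1 = c at hcount ⊢
  rcases n.eq_zero_or_pos with rfl | hn
  · simp
  have hc : (c : ℝ) ≤ k ^ 2 + (n - k : ℝ) ^ 2 := by
    rw [← Nat.cast_sub hk]; exact_mod_cast hcount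
  rw [div_le_iff₀ (by positivity)]
  calc (c : ℝ) ≤ k ^ 2 + (n - k : ℝ) ^ 2 := hc
    _ = _ := by field_simp

theorem M1_kronecker_le {n : ℕ} (A : Matrix (Fin n) (Fin n) ℂ) (hA : IsUnit A) :
    M1 (A ⊗ₖ A) ≤ M1 A ^ 2 + (1 - M1 A) ^ 2 :=
  M1_kronecker_le_general A
end

section
/- Let A ∈ GL_n(ℂ) and suppose there exists μ ∈ ℂ with M_μ(A ⊗ A) > 1/2. Then there exists λ ∈ ℂ with M_λ(A) > 1/2; moreover such λ and μ are unique, and if λ = 1 then μ = 1. -/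
/-!
The eigenvalues of `A ⊗ A`, with algebraic multiplicity, are the `n²` products `λᵢ λⱼ` of
eigenvalues of `A`: a basis of generalised eigenvectors `vᵢ` of `A` gives the basis `vᵢ ⊗ vⱼ`
of generalised eigenvectors of `A ⊗ A`. If `m_c` is the multiplicity of `c` in `A`, the
multiplicity of `μ` in `A ⊗ A` is `∑ₐ m_a m_{μ/a} ≤ (max m) · n`, which forces some `λ` with
`m_λ > n/2`. If moreover `μ ≠ λ²`, only `a = μ/λ ≠ λ` can pair with `λ`, and the sum is at most
`t·m + (n - t)(n - m) ≤ 2m(n - m) ≤ n²/2`, where `m = m_λ` and `t = m_{μ/λ} ≤ n - m`.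
Uniqueness of `λ` and `μ` holds because two values cannot both fill more than half of a multiset.
-/

open Module Module.End

universe u v

namespace Multiset

theorem card_filter_add_count_le {α : Type*} [DecidableEq α] {p : α → Prop} [DecidablePred p]
    (s : Multiset α) {x : α} (hx : ¬p x) : card (s.filter p) + s.count x ≤ card s := by
  have hle : s.filter (x = ·) ≤ s.filter (¬p ·) :=
    s.monotone_filter_right fun y hy => hy ▸ hx
  calc card (s.filter p) + s.count x
      ≤ card (s.filter p) + card (s.filter (¬p ·)) := by
        rw [count_eq_card_filter_eq]
        exact Nat.add_le_add_left (card_le_card hle) _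
    _ = card s := by rw [← card_add, filter_add_not]

theorem count_le_card_sub_count {α : Type*} [DecidableEq α] (s : Multiset α) {x y : α}
    (hxy : x ≠ y) : s.count x ≤ card s - s.count y := by
  have := s.card_filter_add_count_le (p := (x = ·)) hxy
  rw [← count_eq_card_filter_eq] at this
  omega

theorem eq_of_card_lt_two_mul_count {α : Type*} [DecidableEq α] {s : Multiset α} {x y : α}
    (hx : card s < 2 * s.count x) (hy : card s < 2 * s.count y) : x = y := by
  by_contra hxy
  have := s.count_le_card_sub_count hxy
  omega

theorem map_product_map {α β γ δ : Type*} (s : Multiset α) (t : Multiset β) (f : α → γ)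
    (g : β → δ) : s.map f ×ˢ t.map g = (s ×ˢ t).map (Prod.map f g) := by
  induction s using Multiset.induction_on with
  | empty => simp
  | cons a s ih => simp [ih]

section GroupWithZero

variable {G₀ : Type*} [CommGroupWithZero G₀] [DecidableEq G₀] {R : Multiset G₀}

theorem count_map_mul_product (h0 : (0 : G₀) ∉ R) (S : Multiset G₀) (μ : G₀) :
    ((R ×ˢ S).map fun p => p.1 * p.2).count μ = (R.map fun a => S.count (a⁻¹ * μ)).sum := by
  have hR : ∀ a ∈ R, (S.map (a * ·)).count μ = S.count (a⁻¹ * μ) := fun a ha => by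
    have ha0 : a ≠ 0 := ne_of_mem_of_not_mem ha h0
    conv_lhs => rw [← mul_inv_cancel_left₀ ha0 μ]
    exact count_map_eq_count' _ _ (mul_right_injective₀ ha0) _
  simp only [SProd.sprod, product]
  rw [map_bind, count_bind]
  simp only [map_map, Function.comp_def]
  exact congrArg sum (map_congr rfl hR)

theorem exists_card_lt_two_mul_count_of_count_map_mul_product (h0 : (0 : G₀) ∉ R) {μ : G₀}
    (hμ : card R * card R < 2 * ((R ×ˢ R).map fun p => p.1 * p.2).count μ) :
    ∃ l, card R < 2 * R.count l := by
  by_contra! hsmall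
  rw [count_map_mul_product h0, ← sum_map_mul_left] at hμ
  have := sum_le_card_nsmul (R.map fun a => 2 * R.count (a⁻¹ * μ)) (card R) <| by
    simp only [mem_map]
    rintro _ ⟨a, -, rfl⟩
    exact hsmall _
  rw [card_map, smul_eq_mul] at this
  omega

theorem eq_mul_self_of_card_lt_two_mul_count (h0 : (0 : G₀) ∉ R) {l μ : G₀}
    (hl : card R < 2 * R.count l)
    (hμ : card R * card R < 2 * ((R ×ˢ R).map fun p => p.1 * p.2).count μ) : μ = l * l := by
  by_contra hne
  set n := card R
  set m := R.count l
  have hl0 : l ≠ 0 := ne_of_mem_of_not_mem (count_pos.1 (by omega)) h0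
  -- `P a` holds iff `a = μ / l`; every other `a` pairs only with values `≠ l`, each of
  -- multiplicity at most `n - m`.
  set P : G₀ → Prop := fun a => a⁻¹ * μ = l
  have hPl : ¬P l := fun h => hne ((inv_mul_eq_iff_eq_mul₀ hl0).1 h)
  set t := card (R.filter P)
  have htm : t + m ≤ n := R.card_filter_add_count_le hPl
  have hcard : card (R.filter (¬P ·)) = n - t := by
    have := congrArg card (filter_add_not P R)
    rw [card_add] at this
    omega
  have hP : ((R.filter P).map fun a => R.count (a⁻¹ * μ)).sum ≤ t * m := by
    refine (sum_le_card_nsmul _ _ ?_).trans (by rw [card_map, smul_eq_mul])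
    simp only [mem_map]
    rintro _ ⟨a, ha, rfl⟩
    rw [(of_mem_filter ha : P a)]
  have hnotP : ((R.filter (¬P ·)).map fun a => R.count (a⁻¹ * μ)).sum ≤ (n - t) * (n - m) := by
    refine (sum_le_card_nsmul _ (n - m) ?_).trans (by rw [card_map, smul_eq_mul, hcard])
    simp only [mem_map]
    rintro _ ⟨a, ha, rfl⟩
    exact R.count_le_card_sub_count (of_mem_filter (p := (¬P ·)) ha)
  have hsplit : (R.map fun a => R.count (a⁻¹ * μ)).sum =
      ((R.filter P).map fun a => R.count (a⁻¹ * μ)).sum +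
        ((R.filter (¬P ·)).map fun a => R.count (a⁻¹ * μ)).sum := by
    rw [← sum_add, ← map_add, filter_add_not]
  rw [count_map_mul_product h0, hsplit] at hμ
  obtain ⟨r, hr⟩ : ∃ r, n = m + t + r := ⟨n - m - t, by omega⟩
  rw [show n - t = m + r by omega, show n - m = t + r by omega] at hnotP
  rw [hr] at hμ hl
  nlinarith

end GroupWithZero

end Multiset

namespace Module.End

variable {R M N : Type*} [CommRing R] [AddCommGroup M] [Module R M] [AddCommGroup N] [Module R N]

/-- `f g = (f - a) g + a g`, where `(f - a) g` commutes with `a g` and is locally nilpotent on the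
generalised `a`-eigenspace of `f`. -/
theorem maxGenEigenspace_inf_le_mul {f g : End R M} (h : Commute f g) (a b : R) :
    f.maxGenEigenspace a ⊓ g.maxGenEigenspace b ≤ (f * g).maxGenEigenspace (a * b) := by
  have hsub : Commute (f - a • 1) g := h.sub_left (Algebra.commute_algebraMap_left a g)
  have hnil : f.maxGenEigenspace a ≤ ((f - a • 1) * g).maxGenEigenspace 0 := by
    intro x hx
    obtain ⟨k, hk⟩ := (mem_maxGenEigenspace _ _ _).1 hx
    refine (mem_maxGenEigenspace _ _ _).2 ⟨k, ?_⟩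
    rw [zero_smul, sub_zero, hsub.mul_pow, (hsub.pow_pow k k).eq, mul_apply, hk, map_zero]
  have hadd := genEigenspace_inf_le_add ((f - a • 1) * g) (a • g) 0 (a * b) ⊤ ⊤
    ((hsub.mul_left (Commute.refl g)).smul_right a)
  rw [sub_mul, smul_mul_assoc, one_mul, sub_add_cancel, zero_add, top_add] at hadd
  exact (inf_le_inf hnil (genEigenspace_le_smul g b a ⊤)).trans hadd

theorem tmul_mem_maxGenEigenspace_rTensor {f : End R M} {a : R} {x : M}
    (hx : x ∈ f.maxGenEigenspace a) (y : N) : x ⊗ₜ y ∈ maxGenEigenspace (f.rTensor N) a := by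
  obtain ⟨k, hk⟩ := (mem_maxGenEigenspace _ _ _).1 hx
  refine (mem_maxGenEigenspace _ _ _).2 ⟨k, ?_⟩
  have : f.rTensor N - a • 1 = (f - a • 1).rTensor N := by ext; simp
  rw [this, LinearMap.rTensor_pow, LinearMap.rTensor_tmul, hk, TensorProduct.zero_tmul]

theorem tmul_mem_maxGenEigenspace_lTensor {g : End R N} {b : R} {y : N}
    (hy : y ∈ g.maxGenEigenspace b) (x : M) : x ⊗ₜ y ∈ maxGenEigenspace (g.lTensor M) b := by
  obtain ⟨k, hk⟩ := (mem_maxGenEigenspace _ _ _).1 hy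
  refine (mem_maxGenEigenspace _ _ _).2 ⟨k, ?_⟩
  have : g.lTensor M - b • 1 = (g - b • 1).lTensor M := by ext; simp
  rw [this, LinearMap.lTensor_pow, LinearMap.lTensor_tmul, hk, TensorProduct.tmul_zero]

theorem tmul_mem_maxGenEigenspace_map {f : End R M} {g : End R N} {a b : R} {x : M} {y : N}
    (hx : x ∈ f.maxGenEigenspace a) (hy : y ∈ g.maxGenEigenspace b) :
    x ⊗ₜ y ∈ maxGenEigenspace (TensorProduct.map f g) (a * b) := by
  have hcomm : Commute (f.rTensor N) (g.lTensor M) := by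
    show _ ∘ₗ _ = _ ∘ₗ _
    rw [LinearMap.rTensor_comp_lTensor, LinearMap.lTensor_comp_rTensor]
  rw [← LinearMap.rTensor_comp_lTensor]
  exact maxGenEigenspace_inf_le_mul hcomm a b
    ⟨tmul_mem_maxGenEigenspace_rTensor hx y, tmul_mem_maxGenEigenspace_lTensor hy x⟩

end Module.End

section Charpoly

variable {K : Type u} {V : Type v} {W : Type*} [Field K] [AddCommGroup V] [Module K V]
  [FiniteDimensional K V] [AddCommGroup W] [Module K W] [FiniteDimensional K W]

theorem LinearMap.roots_charpoly_eq_of_basis_mem_maxGenEigenspace {ι : Type*} [Fintype ι]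
    (f : End K V) (b : Basis ι K V) (d : ι → K) (hb : ∀ i, b i ∈ f.maxGenEigenspace (d i)) :
    f.charpoly.roots = Finset.univ.val.map d := by
  classical
  refine (Multiset.eq_of_le_of_card_le (Multiset.le_iff_count.2 fun c => ?_) ?_).symm
  · rw [Polynomial.count_roots, ← LinearMap.finrank_maxGenEigenspace_eq, Multiset.count_map,
      ← Finset.filter_val, Finset.card_val]
    set S := Finset.univ.filter fun i => c = d i
    have hspan : Submodule.span K (Set.range (b ∘ ((↑) : S → ι))) ≤ f.maxGenEigenspace c := by
      rw [Submodule.span_le]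
      rintro _ ⟨⟨i, hi⟩, rfl⟩
      rw [(Finset.mem_filter.1 hi).2]
      exact hb i
    calc S.card = finrank K (Submodule.span K (Set.range (b ∘ ((↑) : S → ι)))) := by
          rw [finrank_span_eq_card (b.linearIndependent.comp _ Subtype.val_injective),
            Fintype.card_coe]
      _ ≤ _ := Submodule.finrank_mono hspan
  · rw [Multiset.card_map, Finset.card_val, Finset.card_univ, ← finrank_eq_card_basis b,
      ← LinearMap.charpoly_natDegree f]
    exact Polynomial.card_roots' _

theorem Module.End.exists_basis_mem_maxGenEigenspace [IsAlgClosed K] (f : End K V) :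
    ∃ (ι : Type (max u v)) (_ : Fintype ι) (b : Basis ι K V) (d : ι → K),
      ∀ i, b i ∈ f.maxGenEigenspace (d i) := by
  classical
  have hf : DirectSum.IsInternal f.maxGenEigenspace :=
    DirectSum.isInternal_submodule_of_iSupIndep_of_iSup_eq_top
      f.independent_maxGenEigenspace f.iSup_maxGenEigenspace_eq_top
  let b := hf.collectedBasis fun c => Free.chooseBasis K (f.maxGenEigenspace c)
  exact ⟨_, FiniteDimensional.fintypeBasisIndex b, b, Sigma.fst, hf.collectedBasis_mem _⟩

theorem LinearMap.roots_charpoly_tensorProduct_map [IsAlgClosed K] (f : End K V) (g : End K W) :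
    (TensorProduct.map f g).charpoly.roots =
      (f.charpoly.roots ×ˢ g.charpoly.roots).map fun p => p.1 * p.2 := by
  obtain ⟨ι, _, b, d, hb⟩ := f.exists_basis_mem_maxGenEigenspace
  obtain ⟨κ, _, b', d', hb'⟩ := g.exists_basis_mem_maxGenEigenspace
  have hbb' : ∀ p : ι × κ,
      b.tensorProduct b' p ∈ maxGenEigenspace (TensorProduct.map f g) (d p.1 * d' p.2) :=
    fun p => by
      rw [Basis.tensorProduct_apply]
      exact tmul_mem_maxGenEigenspace_map (hb p.1) (hb' p.2)
  rw [LinearMap.roots_charpoly_eq_of_basis_mem_maxGenEigenspace _ _ _ hbb',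
    LinearMap.roots_charpoly_eq_of_basis_mem_maxGenEigenspace f b d hb,
    LinearMap.roots_charpoly_eq_of_basis_mem_maxGenEigenspace g b' d' hb',
    Multiset.map_product_map, Multiset.map_map, ← Finset.univ_product_univ, Finset.product_val]
  rfl

end Charpoly

open Matrix Kronecker

section Matrix

variable {K m n : Type*} [Field K] [IsAlgClosed K] [Fintype m] [DecidableEq m] [Fintype n]
  [DecidableEq n]

theorem Matrix.roots_charpoly_kronecker_s9 (A : Matrix m m K) (B : Matrix n n K) :
    (A ⊗ₖ B).charpoly.roots = (A.charpoly.roots ×ˢ B.charpoly.roots).map fun p => p.1 * p.2 := by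
  rw [← charpoly_toLin _ ((Pi.basisFun K m).tensorProduct (Pi.basisFun K n)), toLin_kronecker,
    LinearMap.roots_charpoly_tensorProduct_map, charpoly_toLin, charpoly_toLin]

theorem Matrix.card_roots_charpoly (A : Matrix m m K) :
    Multiset.card A.charpoly.roots = Fintype.card m := by
  rw [IsAlgClosed.card_roots_eq_natDegree, charpoly_natDegree_eq_dim]

theorem Matrix.zero_notMem_roots_charpoly {A : Matrix m m K} (hA : IsUnit A) :
    (0 : K) ∉ A.charpoly.roots := fun h => by
  rw [isUnit_iff_isUnit_det, det_eq_prod_roots_charpoly] at hA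
  exact not_isUnit_zero (Multiset.prod_eq_zero h ▸ hA)

end Matrix

theorem exists_unique_large_multiplicity {n : ℕ} (A : Matrix (Fin n) (Fin n) ℂ)
    (hA : IsUnit A) (μ : ℂ)
    (hμ : n ^ 2 < 2 * (A ⊗ₖ A).charpoly.roots.count μ) :
    ∃ l : ℂ, n < 2 * A.charpoly.roots.count l ∧
      (∀ l' : ℂ, n < 2 * A.charpoly.roots.count l' → l' = l) ∧
      (∀ μ' : ℂ, n ^ 2 < 2 * (A ⊗ₖ A).charpoly.roots.count μ' → μ' = μ) ∧
      (l = 1 → μ = 1) := by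
  have hn : n = Multiset.card A.charpoly.roots := by rw [card_roots_charpoly, Fintype.card_fin]
  have hn2 : n ^ 2 = Multiset.card (A ⊗ₖ A).charpoly.roots := by
    rw [card_roots_charpoly, Fintype.card_prod, Fintype.card_fin, sq]
  have h0 := zero_notMem_roots_charpoly hA
  have hμR : Multiset.card A.charpoly.roots * Multiset.card A.charpoly.roots <
      2 * ((A.charpoly.roots ×ˢ A.charpoly.roots).map fun p => p.1 * p.2).count μ := by
    rwa [← roots_charpoly_kronecker_s9, ← hn, ← sq]
  obtain ⟨l, hl⟩ := Multiset.exists_card_lt_two_mul_count_of_count_map_mul_product h0 hμR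
  refine ⟨l, by omega, fun l' hl' => Multiset.eq_of_card_lt_two_mul_count (by omega) hl,
    fun μ' hμ' => Multiset.eq_of_card_lt_two_mul_count (s := (A ⊗ₖ A).charpoly.roots)
      (by omega) (by omega), fun hl1 => ?_⟩
  rw [Multiset.eq_mul_self_of_card_lt_two_mul_count h0 hl hμR, hl1, one_mul]
end

section
/- Let λ_1, …, λ_n ∈ ℂ and μ ∈ ℂ* be such that |{(i,j) : λ_i λ_j = μ}| > n²/2. Then there exists λ ∈ ℂ such that |{j : λ_j = λ}| > n/2. -/
theorem exists_majority_eigenvalue {n : ℕ} (l : Fin n → ℂ) (μ : ℂ) (hμ : μ ≠ 0)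
    (h : n ^ 2 < 2 * (Finset.univ.filter fun p : Fin n × Fin n => l p.1 * l p.2 = μ).card) :
    ∃ lam : ℂ, n < 2 * (Finset.univ.filter fun j : Fin n => l j = lam).card := by
  classical
  have key : (Finset.univ.filter fun p : Fin n × Fin n => l p.1 * l p.2 = μ).card
      = ∑ i : Fin n, (Finset.univ.filter fun j : Fin n => l i * l j = μ).card := by
    rw [Finset.card_eq_sum_card_fiberwise (f := Prod.fst) (t := Finset.univ)
      (fun _ _ => Finset.mem_univ _)]
    refine Finset.sum_congr rfl fun i _ => ?_
    refine Finset.card_bij (fun p _ => p.2) ?_ ?_ ?_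
    · intro p hp
      simp only [Finset.mem_filter, Finset.mem_univ, true_and] at hp ⊢
      rw [← hp.2]; exact hp.1
    · intro p hp q hq hpq
      simp only [Finset.mem_filter] at hp hq
      exact Prod.ext (hp.2.trans hq.2.symm) hpq
    · intro j hj
      simp only [Finset.mem_filter, Finset.mem_univ, true_and] at hj
      exact ⟨(i, j), by simp [hj], rfl⟩
  have hex : ∃ i : Fin n, n < 2 * (Finset.univ.filter fun j : Fin n => l i * l j = μ).card := by
    by_contra hc
    push_neg at hc
    have hsum : ∑ i : Fin n, 2 * (Finset.univ.filter fun j : Fin n => l i * l j = μ).card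
        ≤ ∑ _i : Fin n, n := Finset.sum_le_sum fun i _ => hc i
    rw [← Finset.mul_sum, ← key, Finset.sum_const, Finset.card_univ, Fintype.card_fin,
      smul_eq_mul] at hsum
    have : n ^ 2 = n * n := sq n
    omega
  obtain ⟨i, hi⟩ := hex
  have hli : l i ≠ 0 := by
    intro h0
    have : (Finset.univ.filter fun j : Fin n => l i * l j = μ) = ∅ := by
      ext j; simp [h0, Ne.symm hμ]
    rw [this] at hi
    simp at hi
  refine ⟨μ / l i, lt_of_lt_of_le hi ?_⟩
  gcongr 2 * ?_
  apply Finset.card_le_card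
  intro j hj
  simp only [Finset.mem_filter, Finset.mem_univ, true_and] at hj ⊢
  rw [eq_div_iff hli, mul_comm]
  exact hj
end

section
/- Let A ∈ GL_n(ℂ) be a unipotent matrix (all eigenvalues equal to 1), and let J(A) be the number of Jordan blocks of A divided by n. Then J(A ⊗ A) ≤ J(A) and J(A ⊗ A) ≤ J(A)² + (1 - J(A))². -/
open Matrix Kronecker Polynomial

/-- `Jfrac A` : for a unipotent matrix, the number of Jordan blocks (i.e. the geometric
multiplicity of the eigenvalue `1`) divided by the size of the matrix. -/
noncomputable def Jfrac {m : Type*} [Fintype m] [DecidableEq m] (A : Matrix m m ℂ) : ℝ :=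
  (Module.finrank ℂ (Module.End.eigenspace (Matrix.toLin' A) 1) : ℝ) / Fintype.card m

/-!
Under `vec`, the fixed vectors of `A ⊗ₖ A` are the matrices `X` with `A X Aᵀ = X`, i.e. the
intertwiners `f ∘ X = X ∘ g` of the nilpotent maps `f = A - 1` and `g = Aᵀ⁻¹ - 1`, whose kernels
both have the number of Jordan blocks of `A` as dimension.
For endomorphisms `f` of `V` and `g` of `W`, an intertwiner maps `range g` into `range f`, and
restricting it there has kernel `Hom(W ⧸ range g, ker f)`, whence
`dim I(f, g) ≤ dim ker f * dim ker g + dim I(f|range f, g|range g)`.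
Bounding the last term by `dim range g * dim range f` gives the second inequality; for nilpotent
`g`, iterating the estimate with `dim ker (f|range f) ≤ dim ker f` gives
`dim I(f, g) ≤ dim ker f * dim W`, the first.
-/

open Module LinearMap

section Intertwiners

variable {K V W : Type*} [Field K] [AddCommGroup V] [Module K V] [AddCommGroup W] [Module K W]

def intertwiners (f : Module.End K V) (g : Module.End K W) : Submodule K (W →ₗ[K] V) :=
  eqLocus (llcomp K W V V f) (lcomp K V g)

variable {f : Module.End K V} {g : Module.End K W}

theorem mem_intertwiners {X : W →ₗ[K] V} : X ∈ intertwiners f g ↔ f ∘ₗ X = X ∘ₗ g := Iff.rfl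

theorem apply_mem_range_of_mem_intertwiners {X : W →ₗ[K] V} (hX : X ∈ intertwiners f g)
    {w : W} (hw : w ∈ range g) : X w ∈ range f := by
  obtain ⟨u, rfl⟩ := hw
  exact ⟨X u, congr($hX u)⟩

variable (f) in
def restrictRange : Module.End K (range f) :=
  f.restrict fun x _ ↦ mem_range_self f x

variable (f g) in
def restrictIntertwiner :
    intertwiners f g →ₗ[K] intertwiners (restrictRange f) (restrictRange g) where
  toFun X := ⟨X.1.restrict fun _ ↦ apply_mem_range_of_mem_intertwiners X.2, by
    ext w
    exact congr($(X.2) w)⟩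
  map_add' _ _ := rfl
  map_smul' _ _ := rfl

variable (f g) in
def liftCoker : ((W ⧸ range g) →ₗ[K] ker f) →ₗ[K] (W →ₗ[K] V) :=
  lcomp K V (range g).mkQ ∘ₗ llcomp K (W ⧸ range g) (ker f) V (ker f).subtype

theorem map_ker_restrictIntertwiner_le :
    (ker (restrictIntertwiner f g)).map (intertwiners f g).subtype ≤ range (liftCoker f g) := by
  rintro _ ⟨X, hX, rfl⟩
  have hXg : ∀ w, X.1 (g w) = 0 := fun w ↦ congr((($hX).1 ⟨g w, mem_range_self g w⟩).1)
  refine ⟨(range g).liftQ (X.1.codRestrict (ker f) fun w ↦ ?_) ?_, ?_⟩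
  · rw [mem_ker, ← hXg w]
    exact congr($(X.2) w)
  · rintro _ ⟨w, rfl⟩
    exact Subtype.ext (hXg w)
  · ext w
    rfl

variable [FiniteDimensional K V] [FiniteDimensional K W]

theorem finrank_quotient_range_eq_finrank_ker (g : Module.End K W) :
    finrank K (W ⧸ range g) = finrank K (ker g) := by
  have := Submodule.finrank_quotient_add_finrank (range g)
  have := finrank_range_add_finrank_ker g
  omega

theorem finrank_ker_restrictIntertwiner_le :
    finrank K (ker (restrictIntertwiner f g)) ≤ finrank K (ker f) * finrank K (ker g) :=
  calc finrank K (ker (restrictIntertwiner f g))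
      = finrank K ((ker (restrictIntertwiner f g)).map (intertwiners f g).subtype) :=
        (Submodule.equivMapOfInjective _ (Submodule.injective_subtype _) _).finrank_eq
    _ ≤ finrank K (range (liftCoker f g)) := Submodule.finrank_mono map_ker_restrictIntertwiner_le
    _ ≤ finrank K ((W ⧸ range g) →ₗ[K] ker f) := finrank_range_le _
    _ = finrank K (ker f) * finrank K (ker g) := by
        rw [finrank_linearMap, finrank_quotient_range_eq_finrank_ker, mul_comm]

theorem finrank_intertwiners_le_add :
    finrank K (intertwiners f g) ≤ finrank K (ker f) * finrank K (ker g) +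
      finrank K (intertwiners (restrictRange f) (restrictRange g)) := by
  have := finrank_range_add_finrank_ker (V := intertwiners f g)
    (V₂ := intertwiners (restrictRange f) (restrictRange g)) (restrictIntertwiner f g)
  have := Submodule.finrank_le (range (restrictIntertwiner f g))
  have := finrank_ker_restrictIntertwiner_le (f := f) (g := g)
  omega

theorem finrank_intertwiners_le_sq :
    finrank K (intertwiners f g) ≤ finrank K (ker f) * finrank K (ker g) +
      finrank K (range g) * finrank K (range f) :=
  finrank_intertwiners_le_add.trans <| Nat.add_le_add_left
    ((Submodule.finrank_le _).trans_eq (finrank_linearMap K K _ _)) _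

omit [FiniteDimensional K W] in
theorem finrank_ker_restrictRange_le (f : Module.End K V) :
    finrank K (ker (restrictRange f)) ≤ finrank K (ker f) := by
  rw [(Submodule.equivMapOfInjective _ (range f).injective_subtype _).finrank_eq]
  refine Submodule.finrank_mono ?_
  rintro _ ⟨x, hx, rfl⟩
  exact congr($hx.1)

omit [FiniteDimensional K V] [FiniteDimensional K W] in
theorem restrictRange_pow_eq_zero {k : ℕ} (hg : g ^ (k + 1) = 0) : restrictRange g ^ k = 0 := by
  rw [restrictRange, Module.End.pow_restrict]
  ext ⟨_, w, rfl⟩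
  simp [← Module.End.mul_apply, ← pow_succ, hg]

theorem finrank_intertwiners_le_of_isNilpotent (hg : IsNilpotent g) :
    finrank K (intertwiners f g) ≤ finrank K (ker f) * finrank K W := by
  obtain ⟨k, hg⟩ := hg
  induction k generalizing V W with
  | zero =>
    have : Subsingleton W := subsingleton_of_forall_eq 0 fun w ↦ by simpa using congr($hg w)
    simp [finrank_zero_of_subsingleton]
  | succ k ih =>
    calc finrank K (intertwiners f g)
        ≤ finrank K (ker f) * finrank K (ker g) +
          finrank K (intertwiners (restrictRange f) (restrictRange g)) :=
          finrank_intertwiners_le_add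
      _ ≤ finrank K (ker f) * finrank K (ker g) + finrank K (ker f) * finrank K (range g) := by
          gcongr
          exact (ih (restrictRange_pow_eq_zero hg)).trans
            (Nat.mul_le_mul_right _ (finrank_ker_restrictRange_le f))
      _ = finrank K (ker f) * finrank K W := by
          rw [← mul_add, add_comm, finrank_range_add_finrank_ker]

end Intertwiners

def Matrix.vecLinearEquiv {R m n : Type*} [Semiring R] : Matrix m n R ≃ₗ[R] (n × m → R) where
  toFun := vec
  invFun v := of fun i j ↦ v (j, i)
  left_inv _ := rfl
  right_inv _ := rfl
  map_add' := vec_add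
  map_smul' := vec_smul

@[simp]
theorem Matrix.vecLinearEquiv_apply {R m n : Type*} [Semiring R] (A : Matrix m n R) :
    vecLinearEquiv A = vec A := rfl

theorem isUnit_of_isNilpotent_sub_one {R : Type*} [Ring R] {a : R} (ha : IsNilpotent (a - 1)) :
    IsUnit a := by
  simpa using ha.isUnit_add_one

section CommRing

variable {R m : Type*} [CommRing R] [Fintype m] [DecidableEq m]

theorem Matrix.isNilpotent_sub_one_of_charpoly_eq {A : Matrix m m R} {k : ℕ}
    (hA : A.charpoly = (X - C 1) ^ k) : IsNilpotent (A - 1) :=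
  ⟨k, by simpa [hA] using aeval_self_charpoly A⟩

theorem Matrix.inv_sub_one_eq_neg_inv_mul {A : Matrix m m R} (hA : IsUnit A) :
    A⁻¹ - 1 = -(A⁻¹ * (A - 1)) := by
  rw [mul_sub, nonsing_inv_mul _ ((isUnit_iff_isUnit_det A).mp hA), mul_one, neg_sub]

theorem Matrix.isNilpotent_inv_sub_one {A : Matrix m m R} (hA : IsNilpotent (A - 1)) :
    IsNilpotent (A⁻¹ - 1) := by
  have hdet := (isUnit_iff_isUnit_det A).mp (isUnit_of_isNilpotent_sub_one hA)
  have hcomm : Commute A⁻¹ A := by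
    rw [Commute, SemiconjBy, nonsing_inv_mul _ hdet, mul_nonsing_inv _ hdet]
  rw [inv_sub_one_eq_neg_inv_mul (isUnit_of_isNilpotent_sub_one hA)]
  exact ((hcomm.sub_right (Commute.one_right _)).isNilpotent_mul_left hA).neg

theorem Matrix.mul_mul_transpose_eq_iff {A X : Matrix m m R} (hA : IsUnit A) :
    A * X * Aᵀ = X ↔ (A - 1) * X = X * (Aᵀ⁻¹ - 1) := by
  have hT : IsUnit Aᵀ.det := isUnit_det_transpose _ ((isUnit_iff_isUnit_det A).mp hA)
  rw [mul_sub, sub_mul, one_mul, mul_one, sub_left_inj]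
  constructor
  · intro h
    calc A * X = A * X * Aᵀ * Aᵀ⁻¹ := (mul_nonsing_inv_cancel_right _ _ hT).symm
      _ = X * Aᵀ⁻¹ := by rw [h]
  · intro h
    rw [h, mul_assoc, nonsing_inv_mul _ hT, mul_one]

theorem Matrix.eigenspace_toLin'_one (A : Matrix m m R) :
    Module.End.eigenspace (toLin' A) 1 = ker (toLin' (A - 1)) := by
  rw [Module.End.eigenspace_def, one_smul, map_sub, toLin'_one, Module.End.one_eq_id]

end CommRing

section Field

variable {K m : Type*} [Field K] [Fintype m] [DecidableEq m]

theorem Matrix.ker_toLin'_inv_sub_one {A : Matrix m m K} (hA : IsUnit A) :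
    ker (toLin' (A⁻¹ - 1)) = ker (toLin' (A - 1)) := by
  rw [inv_sub_one_eq_neg_inv_mul hA, map_neg, ker_neg, toLin'_mul, ker_comp_of_ker_eq_bot]
  exact ker_eq_bot.mpr (mulVec_injective_iff_isUnit.mpr (isUnit_nonsing_inv_iff.mpr hA))

theorem Matrix.finrank_ker_toLin'_transpose (A : Matrix m m K) :
    finrank K (ker (toLin' Aᵀ)) = finrank K (ker (toLin' A)) := by
  have := finrank_range_add_finrank_ker (toLin' A)
  have := finrank_range_add_finrank_ker (toLin' Aᵀ)
  have : finrank K (range (toLin' Aᵀ)) = finrank K (range (toLin' A)) := rank_transpose A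
  omega

theorem Matrix.finrank_eigenspace_kronecker_self {A : Matrix m m K} (hA : IsUnit A) :
    finrank K (Module.End.eigenspace (toLin' (A ⊗ₖ A)) 1) =
      finrank K (intertwiners (toLin' (A - 1)) (toLin' (Aᵀ⁻¹ - 1))) := by
  let e : (m × m → K) ≃ₗ[K] Module.End K (m → K) := vecLinearEquiv.symm.trans toLin'
  suffices Module.End.eigenspace (toLin' (A ⊗ₖ A)) 1 = (intertwiners _ _).comap e.toLinearMap by
    rw [this]
    exact (e.ofSubmodule' _).finrank_eq
  ext v
  obtain ⟨X, rfl⟩ := vecLinearEquiv.surjective v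
  rw [Module.End.mem_eigenspace_iff, one_smul, toLin'_apply, vecLinearEquiv_apply,
    kronecker_mulVec_vec, vec_inj, mul_mul_transpose_eq_iff hA, Submodule.mem_comap,
    mem_intertwiners]
  change _ ↔ toLin' (A - 1) ∘ₗ toLin' X = toLin' X ∘ₗ toLin' (Aᵀ⁻¹ - 1)
  rw [← toLin'_mul, ← toLin'_mul, toLin'.injective.eq_iff]

theorem Matrix.finrank_eigenspace_one_add_rank (A : Matrix m m K) :
    finrank K (Module.End.eigenspace (toLin' A) 1) + (A - 1).rank = Fintype.card m := by
  rw [eigenspace_toLin'_one, add_comm, rank, ← toLin'_apply', finrank_range_add_finrank_ker,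
    finrank_fintype_fun_eq_card]

theorem Matrix.finrank_eigenspace_kronecker_self_le_mul {A : Matrix m m K}
    (hA : IsNilpotent (A - 1)) :
    finrank K (Module.End.eigenspace (toLin' (A ⊗ₖ A)) 1) ≤
      finrank K (Module.End.eigenspace (toLin' A) 1) * Fintype.card m := by
  have hT : IsNilpotent (Aᵀ - 1) := by
    simpa [transpose_sub] using isNilpotent_transpose_iff.mpr hA
  rw [finrank_eigenspace_kronecker_self (isUnit_of_isNilpotent_sub_one hA),
    eigenspace_toLin'_one, ← finrank_fintype_fun_eq_card K]
  exact finrank_intertwiners_le_of_isNilpotent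
    ((isNilpotent_toLin'_iff _).mpr (isNilpotent_inv_sub_one hT))

theorem Matrix.finrank_eigenspace_kronecker_self_le_sq {A : Matrix m m K} (hA : IsUnit A) :
    finrank K (Module.End.eigenspace (toLin' (A ⊗ₖ A)) 1) ≤
      finrank K (Module.End.eigenspace (toLin' A) 1) *
        finrank K (Module.End.eigenspace (toLin' A) 1) + (A - 1).rank * (A - 1).rank := by
  have hker : finrank K (ker (toLin' (Aᵀ⁻¹ - 1))) = finrank K (ker (toLin' (A - 1))) := by
    rw [ker_toLin'_inv_sub_one ((isUnit_transpose A).mpr hA), ← finrank_ker_toLin'_transpose (A - 1),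
      transpose_sub, transpose_one]
  have hrange : finrank K (range (toLin' (Aᵀ⁻¹ - 1))) = (A - 1).rank := by
    have := finrank_range_add_finrank_ker (toLin' (Aᵀ⁻¹ - 1))
    have := finrank_range_add_finrank_ker (toLin' (A - 1))
    rw [rank, ← toLin'_apply']
    omega
  rw [finrank_eigenspace_kronecker_self hA, eigenspace_toLin'_one]
  refine finrank_intertwiners_le_sq.trans_eq ?_
  rw [hker, hrange, rank, toLin'_apply']

end Field

theorem div_mul_self_le_of_le_mul_of_le_sq_add_sq {d₂ d r : ℕ} (h₁ : d₂ ≤ d * (d + r))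
    (h₂ : d₂ ≤ d * d + r * r) :
    (d₂ : ℝ) / ((d + r) * (d + r)) ≤ d / (d + r) ∧
      (d₂ : ℝ) / ((d + r) * (d + r)) ≤ (d / (d + r)) ^ 2 + (1 - d / (d + r)) ^ 2 := by
  rcases Nat.eq_zero_or_pos (d + r) with hn | hn
  · obtain ⟨rfl, rfl⟩ : d = 0 ∧ r = 0 := by omega
    obtain rfl : d₂ = 0 := by omega
    simp
  have hn : (0 : ℝ) < d + r := by exact_mod_cast hn
  have h₁ : (d₂ : ℝ) ≤ d * (d + r) := by exact_mod_cast h₁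
  have h₂ : (d₂ : ℝ) ≤ d * d + r * r := by exact_mod_cast h₂
  have hsub : 1 - (d : ℝ) / (d + r) = r / (d + r) := by
    field_simp
    ring
  constructor
  · calc (d₂ : ℝ) / ((d + r) * (d + r)) ≤ d * (d + r) / ((d + r) * (d + r)) := by gcongr
      _ = d / (d + r) := mul_div_mul_right _ _ hn.ne'
  · rw [hsub, div_pow, div_pow, ← add_div, sq, sq, sq]
    gcongr

theorem Jfrac_kronecker_le {n : ℕ} (A : Matrix (Fin n) (Fin n) ℂ)
    (hA : A.charpoly = (X - C 1) ^ n) :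
    Jfrac (A ⊗ₖ A) ≤ Jfrac A ∧
      Jfrac (A ⊗ₖ A) ≤ Jfrac A ^ 2 + (1 - Jfrac A) ^ 2 := by
  have hnil := isNilpotent_sub_one_of_charpoly_eq hA
  have hcard := finrank_eigenspace_one_add_rank A
  have h₁ := finrank_eigenspace_kronecker_self_le_mul hnil
  have h₂ := finrank_eigenspace_kronecker_self_le_sq (isUnit_of_isNilpotent_sub_one hnil)
  rw [← hcard] at h₁
  rw [Jfrac, Jfrac, Fintype.card_prod, ← hcard, Nat.cast_mul, Nat.cast_add]
  exact div_mul_self_le_of_le_mul_of_le_sq_add_sq h₁ h₂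
end

section
/- Let c_1, c_2, … be nonnegative integers, almost all zero, with Σ_i i·c_i = n. Then Σ_{i,j} c_i c_j min(i,j) ≤ (Σ_i c_i)² + (Σ_i (i-1) c_i)² and Σ_{i,j} c_i c_j min(i,j) ≤ (Σ_i i c_i)(Σ_j c_j). -/
theorem jordan_block_count_inequalities (c : ℕ →₀ ℕ) (n : ℕ)
    (hn : (c.sum fun i ci => i * ci) = n) :
    (∑ i ∈ c.support, ∑ j ∈ c.support, c i * c j * min i j) ≤
        (∑ i ∈ c.support, c i) ^ 2 + (∑ i ∈ c.support, (i - 1) * c i) ^ 2 ∧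
      (∑ i ∈ c.support, ∑ j ∈ c.support, c i * c j * min i j) ≤
        (∑ i ∈ c.support, i * c i) * (∑ j ∈ c.support, c j) := by
  have key : ∀ i j : ℕ, min i j ≤ 1 + (i - 1) * (j - 1) := by
    intro i j
    rcases Nat.le_total i j with h | h
    · rw [min_eq_left h]
      rcases Nat.lt_or_ge j 2 with hj | hj
      · omega
      · have := Nat.le_mul_of_pos_right (i - 1) (show 0 < j - 1 by omega)
        omega
    · rw [min_eq_right h]
      rcases Nat.lt_or_ge i 2 with hi | hi
      · omega
      · have := Nat.le_mul_of_pos_left (j - 1) (show 0 < i - 1 by omega)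
        omega
  constructor
  · have heq : (∑ i ∈ c.support, c i) ^ 2 + (∑ i ∈ c.support, (i - 1) * c i) ^ 2
        = ∑ i ∈ c.support, ∑ j ∈ c.support, c i * c j * (1 + (i - 1) * (j - 1)) := by
      rw [sq, sq, Finset.sum_mul_sum, Finset.sum_mul_sum, ← Finset.sum_add_distrib]
      refine Finset.sum_congr rfl fun i _ => ?_
      rw [← Finset.sum_add_distrib]
      refine Finset.sum_congr rfl fun j _ => ?_
      ring
    rw [heq]
    exact Finset.sum_le_sum fun i _ => Finset.sum_le_sum fun j _ =>
      Nat.mul_le_mul_left _ (key i j)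
  · rw [Finset.sum_mul_sum]
    refine Finset.sum_le_sum fun i _ => Finset.sum_le_sum fun j _ => ?_
    calc c i * c j * min i j ≤ c i * c j * i :=
          Nat.mul_le_mul_left _ (min_le_left i j)
      _ = i * c i * c j := by ring
end
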